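/- Suppose the cost is separable, c(x;ξ) = Σ_{i=1}^d c_i(x;ξ_i) for ξ = (ξ₁,…,ξ_d) ∈ Ξ ⊆ ℝ^d, where each c_i : X × ℝ → ℝ is equicontinuous in x, continuous in ξ_i, integrable under the relevant marginals, and together with the i-th marginal confidence regions satisfies: either the i-th projection of Ξ is bounded, or there is a continuous φ_i : ℝ → [0,∞) with sup_{H∈𝓕_{i,N}} |E_H[φ_i(ζ)] − (1/N)Σ_{j=1}^N φ_i(ξ_i^j)| → 0 almost surely and |c_i(x;ζ)| = O(φ_i(ζ)) for each x. If, for each i = 1,…,d, the univariate test with confidence regions (𝓕_{i,N}) (depending on ξ_i¹,…,ξ_i^N) is uniformly consistent for the i-th marginal F_i of F, then the test of marginals with confidence regions 𝓕_N = { G Borel probability measure on Ξ : the i-th marginal of G lies in 𝓕_{i,N} for every i } is c-consistent for F: almost surely, every sequence (G_N) with G_N ∈ 𝓕_N for all but finitely many N satisfies E_{G_N}[c(x;ξ)] → E_F[c(x;ξ)] for every x ∈ X. -/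

import Mathlib

open MeasureTheory ProbabilityTheory Filter Topology Set
open scoped BoundedContinuousFunction

/-!
By separability, `E_G[c(x;·)] = ∑ i, E_{G_i}[c_i(x;·)]` for the marginals `G_i`, so it suffices
to treat one coordinate. Uniform consistency turns `G_{N,i} ∈ 𝓕_{i,N}` (eventually) into weak
convergence `G_{N,i} → F_i`. If the `i`-th projection of `Ξ` is bounded, all these measures live
on one compact interval, on which `c_i(x;·)` agrees with a bounded continuous function. Otherwise
`|c_i(x;·)| ≤ ν + η φ_i`, and `E_{G_{N,i}}[φ_i] → E_{F_i}[φ_i]` by the strong law of large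
numbers; weak convergence is lower semicontinuous on integrals of nonnegative continuous
functions, and applying this to `φ_i ± c_i(x;·)` gives convergence of `E_{G_{N,i}}[c_i(x;·)]`.
The exceptional null sets come from uniform consistency and the strong law alone, so they depend
neither on `x` nor on `(G_N)`.
-/

section WeakConvergence

variable {Ω ι : Type*} [MeasurableSpace Ω] [TopologicalSpace Ω] [OpensMeasurableSpace Ω]
  {L : Filter ι} {μs : ι → ProbabilityMeasure Ω} {μ : ProbabilityMeasure Ω}

theorem eventually_lt_integral_of_tendsto (hμ : Tendsto μs L (𝓝 μ)) {g : Ω → ℝ}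
    (hg : Continuous g) (hg₀ : 0 ≤ g) (hgμ : Integrable g μ)
    (hgμs : ∀ᶠ i in L, Integrable g (μs i)) {c : ℝ} (hc : c < ∫ x, g x ∂μ) :
    ∀ᶠ i in L, c < ∫ x, g x ∂μs i := by
  let trunc (n : ℕ) : Ω →ᵇ ℝ := .ofNormedAddCommGroup (fun x ↦ min (g x) n)
    (hg.min continuous_const) n fun x ↦ by
      rw [Real.norm_of_nonneg (le_min (hg₀ x) n.cast_nonneg)]
      exact min_le_right _ _
  have h_trunc : Tendsto (fun n ↦ ∫ x, trunc n x ∂μ) atTop (𝓝 (∫ x, g x ∂μ)) :=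
    integral_tendsto_of_tendsto_of_monotone (fun n ↦ (trunc n).integrable μ) hgμ
      (ae_of_all _ fun x _ _ hnm ↦ min_le_min_left _ (Nat.cast_le.2 hnm))
      (ae_of_all _ fun x ↦ tendsto_atTop_of_eventually_const (i₀ := ⌈g x⌉₊)
        fun n hn ↦ min_eq_left ((Nat.le_ceil _).trans (Nat.cast_le.2 hn)))
  obtain ⟨n, hn⟩ := (h_trunc.eventually_const_lt hc).exists
  have h_weak := ProbabilityMeasure.tendsto_iff_forall_integral_tendsto.1 hμ (trunc n)
  filter_upwards [h_weak.eventually_const_lt hn, hgμs] with i hi hgi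
  exact hi.trans_le <| integral_mono ((trunc n).integrable _) hgi fun x ↦ min_le_left _ _

theorem tendsto_integral_of_tendsto_of_abs_le (hμ : Tendsto μs L (𝓝 μ)) {f φ : Ω → ℝ}
    (hf : Continuous f) (hφ : Continuous φ) (hfφ : ∀ x, |f x| ≤ φ x) (hφμ : Integrable φ μ)
    (hφμs : ∀ᶠ i in L, Integrable φ (μs i))
    (hφ_tendsto : Tendsto (fun i ↦ ∫ x, φ x ∂μs i) L (𝓝 (∫ x, φ x ∂μ))) :
    Tendsto (fun i ↦ ∫ x, f x ∂μs i) L (𝓝 (∫ x, f x ∂μ)) := by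
  have integrable_of_abs_le {g : Ω → ℝ} (hg : Continuous g) (hgφ : ∀ x, |g x| ≤ φ x)
      {ν : Measure Ω} (hφν : Integrable φ ν) : Integrable g ν :=
    hφν.mono' hg.aestronglyMeasurable (ae_of_all _ hgφ)
  -- lower semicontinuity for `φ + g ≥ 0`, minus the convergent `φ`-part
  have lower {g : Ω → ℝ} (hg : Continuous g) (hgφ : ∀ x, |g x| ≤ φ x) {c : ℝ}
      (hc : c < ∫ x, g x ∂μ) : ∀ᶠ i in L, c < ∫ x, g x ∂μs i := by
    set δ := ∫ x, g x ∂μ - c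
    have hδ : 0 < δ := sub_pos.2 hc
    have hsum_nonneg : 0 ≤ φ + g := fun x ↦ by
      simp only [Pi.add_apply, Pi.zero_apply]
      linarith [neg_abs_le (g x), hgφ x]
    have hsum := eventually_lt_integral_of_tendsto hμ (hφ.add hg) hsum_nonneg
      (hφμ.add (integrable_of_abs_le hg hgφ hφμ))
      (hφμs.mono fun i hi ↦ hi.add (integrable_of_abs_le hg hgφ hi))
      (c := ∫ x, (φ + g) x ∂μ - δ / 2) (by linarith)
    have hφ_upper := hφ_tendsto.eventually_lt_const
      (by linarith : ∫ x, φ x ∂μ < ∫ x, φ x ∂μ + δ / 2)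
    filter_upwards [hsum, hφ_upper, hφμs] with i hi hφi hφμsi
    simp only [Pi.add_apply] at hi
    rw [integral_add hφμ (integrable_of_abs_le hg hgφ hφμ),
      integral_add hφμsi (integrable_of_abs_le hg hgφ hφμsi)] at hi
    linarith
  refine tendsto_order.2 ⟨fun c hc ↦ lower hf hfφ hc, fun c hc ↦ ?_⟩
  have hneg := lower (g := fun x ↦ -f x) hf.neg (fun x ↦ (abs_neg (f x)).trans_le (hfφ x))
    (c := -c) (by rw [integral_neg]; linarith)
  filter_upwards [hneg] with i hi
  rw [integral_neg] at hi
  linarith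

theorem tendsto_integral_of_tendsto_of_abs_le_add_mul (hμ : Tendsto μs L (𝓝 μ))
    {f φ : Ω → ℝ} (hf : Continuous f) (hφ : Continuous φ) (hφ₀ : 0 ≤ φ) {ν η : ℝ}
    (hfφ : ∀ x, |f x| ≤ ν + η * φ x) (hφμ : Integrable φ μ)
    (hφμs : ∀ᶠ i in L, Integrable φ (μs i))
    (hφ_tendsto : Tendsto (fun i ↦ ∫ x, φ x ∂μs i) L (𝓝 (∫ x, φ x ∂μ))) :
    Tendsto (fun i ↦ ∫ x, f x ∂μs i) L (𝓝 (∫ x, f x ∂μ)) := by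
  have integral_affine {m : Measure Ω} [IsProbabilityMeasure m] (h : Integrable φ m) :
      ∫ x, (|ν| + |η| * φ x) ∂m = |ν| + |η| * ∫ x, φ x ∂m := by
    rw [integral_add (integrable_const _) (h.const_mul _), integral_const_mul]
    simp
  refine tendsto_integral_of_tendsto_of_abs_le (φ := fun x ↦ |ν| + |η| * φ x) hμ hf (by fun_prop)
    (fun x ↦ (hfφ x).trans (add_le_add (le_abs_self ν)
      (mul_le_mul_of_nonneg_right (le_abs_self η) (hφ₀ x))))
    ((integrable_const _).add (hφμ.const_mul _))
    (hφμs.mono fun i hi ↦ (integrable_const _).add (hi.const_mul _)) ?_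
  rw [integral_affine hφμ]
  refine (tendsto_const_nhds.add (hφ_tendsto.const_mul _)).congr' ?_
  filter_upwards [hφμs] with i hi using (integral_affine hi).symm

end WeakConvergence

theorem tendsto_integral_of_tendsto_of_ae_mem_of_isBounded {ι : Type*} {L : Filter ι}
    {μs : ι → ProbabilityMeasure ℝ} {μ : ProbabilityMeasure ℝ} (hμ : Tendsto μs L (𝓝 μ))
    {S : Set ℝ} (hS : Bornology.IsBounded S) (hμS : ∀ᵐ t ∂μ.toMeasure, t ∈ S)
    (hμsS : ∀ i, ∀ᵐ t ∂(μs i).toMeasure, t ∈ S) {f : ℝ → ℝ} (hf : Continuous f) :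
    Tendsto (fun i ↦ ∫ t, f t ∂μs i) L (𝓝 (∫ t, f t ∂μ)) := by
  have hab : sInf S ≤ sSup S := Real.sInf_le_sSup S hS.bddBelow hS.bddAbove
  -- `f` clamped to `[inf S, sup S]` is bounded and agrees with `f` on `S`
  let g : ℝ →ᵇ ℝ := (BoundedContinuousFunction.mkOfCompact
    ⟨fun t : Icc (sInf S) (sSup S) ↦ f t, by fun_prop⟩).compContinuous
      ⟨projIcc _ _ hab, continuous_projIcc⟩
  have integral_eq {ν : Measure ℝ} (hν : ∀ᵐ t ∂ν, t ∈ S) : ∫ t, g t ∂ν = ∫ t, f t ∂ν :=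
    integral_congr_ae <| hν.mono fun t ht ↦ by
      simp [g, projIcc_of_mem hab (hS.subset_Icc_sInf_sSup ht)]
  have hg := ProbabilityMeasure.tendsto_iff_forall_integral_tendsto.1 hμ g
  rw [integral_eq hμS] at hg
  exact hg.congr fun i ↦ integral_eq (hμsS i)

noncomputable def marginal {d : ℕ} (G : ProbabilityMeasure (EuclideanSpace ℝ (Fin d)))
    (i : Fin d) : ProbabilityMeasure ℝ :=
  G.map (f := fun ξv => ξv i) ((measurable_pi_apply i).comp (WithLp.measurable_ofLp 2 _)).aemeasurable

section Marginal

variable {d : ℕ}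

theorem measurable_euclideanSpace_apply (i : Fin d) :
    Measurable fun ξ : EuclideanSpace ℝ (Fin d) ↦ ξ i := by fun_prop

theorem toMeasure_marginal (G : ProbabilityMeasure (EuclideanSpace ℝ (Fin d))) (i : Fin d) :
    (marginal G i).toMeasure = G.toMeasure.map fun ξ ↦ ξ i := by
  simp [marginal]

variable {G : ProbabilityMeasure (EuclideanSpace ℝ (Fin d))} {i : Fin d} {g : ℝ → ℝ}

theorem integral_marginal (hg : AEStronglyMeasurable g (marginal G i).toMeasure) :
    ∫ t, g t ∂(marginal G i).toMeasure = ∫ ξ, g (ξ i) ∂G.toMeasure := by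
  rw [toMeasure_marginal] at hg ⊢
  exact integral_map (measurable_euclideanSpace_apply i).aemeasurable hg

theorem integrable_marginal_iff (hg : AEStronglyMeasurable g (marginal G i).toMeasure) :
    Integrable g (marginal G i).toMeasure ↔ Integrable (fun ξ ↦ g (ξ i)) G.toMeasure := by
  rw [toMeasure_marginal] at hg ⊢
  exact integrable_map_measure hg (measurable_euclideanSpace_apply i).aemeasurable

theorem ae_marginal_mem_closure_image {Ξ : Set (EuclideanSpace ℝ (Fin d))}
    (hG : G.toMeasure Ξᶜ = 0) :
    ∀ᵐ t ∂(marginal G i).toMeasure, t ∈ closure ((fun ξ ↦ ξ i) '' Ξ) := by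
  rw [toMeasure_marginal]
  refine (ae_map_iff (measurable_euclideanSpace_apply i).aemeasurable
    isClosed_closure.measurableSet).2 ?_
  exact (measure_eq_zero_iff_ae_notMem.1 hG).mono fun ξ hξ ↦
    subset_closure (mem_image_of_mem _ (not_not.1 hξ))

theorem integral_sum_apply_eq_sum_integral_marginal {c : Fin d → ℝ → ℝ}
    (hc : ∀ i, Integrable (c i) (marginal G i).toMeasure) :
    ∫ ξ, ∑ i, c i (ξ i) ∂G.toMeasure = ∑ i, ∫ t, c i t ∂(marginal G i).toMeasure := by
  rw [integral_finsetSum _ fun i _ ↦ (integrable_marginal_iff (hc i).1).1 (hc i)]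
  exact Finset.sum_congr rfl fun i _ ↦ (integral_marginal (hc i).1).symm

end Marginal

theorem tendsto_of_eventually_mem {α ι : Type*} [TopologicalSpace α] {l : Filter ι}
    {𝓕 : ι → Set α} {a : α}
    (h𝓕 : ∀ H : ι → α, ¬Tendsto H l (𝓝 a) → ∃ᶠ N in l, H N ∉ 𝓕 N) {H : ι → α}
    (hH : ∀ᶠ N in l, H N ∈ 𝓕 N) : Tendsto H l (𝓝 a) := by
  by_contra h
  exact h𝓕 H h (hH.mono fun _ hN hN' ↦ hN' hN)

theorem ae_tendsto_average_of_pairwise_indepFun {Ω E : Type*} [MeasurableSpace Ω]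
    [MeasurableSpace E] {P : Measure Ω} {ξ : ℕ → Ω → E} (hξ : ∀ k, Measurable (ξ k))
    (hind : Pairwise fun k l ↦ IndepFun (ξ k) (ξ l) P) {μ : Measure E}
    (hlaw : ∀ k, P.map (ξ k) = μ) {g : E → ℝ} (hg : Measurable g) (hgμ : Integrable g μ) :
    ∀ᵐ ω ∂P, Tendsto (fun N : ℕ ↦ (∑ k ∈ Finset.range N, g (ξ k ω)) / N) atTop
      (𝓝 (∫ x, g x ∂μ)) := by
  have hident (k : ℕ) : IdentDistrib (ξ k) (ξ 0) P P :=
    ⟨(hξ k).aemeasurable, (hξ 0).aemeasurable, by rw [hlaw, hlaw]⟩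
  rw [← hlaw 0] at hgμ ⊢
  rw [integral_map (hξ 0).aemeasurable hg.aestronglyMeasurable]
  exact strong_law_ae_real (fun k ω ↦ g (ξ k ω))
    (hgμ.comp_measurable (hξ 0)) (fun k l hkl ↦ (hind hkl).comp hg hg) fun k ↦ (hident k).comp hg

theorem ae_tendsto_integral_of_abs_sub_average_le {d : ℕ} {Ω : Type*} [MeasurableSpace Ω]
    {P : Measure Ω} {F : ProbabilityMeasure (EuclideanSpace ℝ (Fin d))}
    {ξ : ℕ → Ω → EuclideanSpace ℝ (Fin d)} (hξ : ∀ k, Measurable (ξ k))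
    (hind : Pairwise fun k l ↦ IndepFun (ξ k) (ξ l) P)
    (hlaw : ∀ k, P.map (ξ k) = F.toMeasure) {i : Fin d}
    {𝓕 : ℕ → Ω → Set (ProbabilityMeasure ℝ)} {φ : ℝ → ℝ} (hφ : Measurable φ)
    (hφF : Integrable φ (marginal F i).toMeasure)
    (hφ𝓕 : ∀ᵐ ω ∂P, ∀ ε > (0:ℝ), ∀ᶠ N in atTop, ∀ H ∈ 𝓕 N ω,
      |∫ t, φ t ∂H.toMeasure - (∑ k ∈ Finset.range N, φ (ξ k ω i)) / N| ≤ ε) :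
    ∀ᵐ ω ∂P, ∀ T : ℕ → ProbabilityMeasure ℝ, (∀ᶠ N in atTop, T N ∈ 𝓕 N ω) →
      Tendsto (fun N ↦ ∫ t, φ t ∂(T N).toMeasure) atTop
        (𝓝 (∫ t, φ t ∂(marginal F i).toMeasure)) := by
  have hlln := ae_tendsto_average_of_pairwise_indepFun hξ hind hlaw
    (g := fun x ↦ φ (x i)) (hφ.comp (measurable_euclideanSpace_apply i))
    ((integrable_marginal_iff hφ.aestronglyMeasurable).1 hφF)
  rw [← integral_marginal hφ.aestronglyMeasurable] at hlln
  filter_upwards [hφ𝓕, hlln] with ω hclose hlln T hT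
  have hdiff : Tendsto (fun N ↦ ∫ t, φ t ∂(T N).toMeasure -
      (∑ k ∈ Finset.range N, φ (ξ k ω i)) / N) atTop (𝓝 0) :=
    Metric.tendsto_nhds.2 fun ε hε ↦ by
      filter_upwards [hclose (ε / 2) (half_pos hε), hT] with N hN hTN
      rw [Real.dist_eq, sub_zero]
      linarith [hN _ hTN]
  simpa using hdiff.add hlln

theorem stmt15_general {d dx : ℕ} {Ω : Type*} [MeasurableSpace Ω]
    (P : Measure Ω)
    (Ξ : Set (EuclideanSpace ℝ (Fin d)))
    (X : Set (EuclideanSpace ℝ (Fin dx)))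
    (F : ProbabilityMeasure (EuclideanSpace ℝ (Fin d))) (hFsupp : F.toMeasure Ξᶜ = 0)
    -- i.i.d. data drawn from `F`
    (ξ : ℕ → Ω → EuclideanSpace ℝ (Fin d)) (hξmeas : ∀ i, Measurable (ξ i))
    (hiid : ProbabilityTheory.iIndepFun ξ P)
    (hdist : ∀ i, Measure.map (ξ i) P = F.toMeasure)
    -- the univariate confidence regions for each coordinate
    (𝓕i : Fin d → ℕ → Ω → Set (ProbabilityMeasure ℝ))
    -- the separable cost `c(x;ξ) = ∑ i, ci i x (ξ i)`
    (ci : Fin d → EuclideanSpace ℝ (Fin dx) → ℝ → ℝ)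
    -- each `c_i` equicontinuous in `x` and continuous in `ξ_i`
    (hcont : ∀ i, ∀ x ∈ X, Continuous (ci i x))
    -- integrability under the relevant marginals
    (hFint : ∀ i, ∀ x ∈ X, Integrable (ci i x) (marginal F i).toMeasure)
    (h𝓕int : ∀ i N ω, ∀ H ∈ 𝓕i i N ω, ∀ x ∈ X, Integrable (ci i x) H.toMeasure)
    -- boundedness of the `i`-th projection of `Ξ`, or growth control via `φ_i`
    (hgrow : ∀ i : Fin d, Bornology.IsBounded ((fun ξv => ξv i) '' Ξ) ∨
      ∃ φi : ℝ → ℝ, Continuous φi ∧ (∀ t, 0 ≤ φi t) ∧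
        Integrable φi (marginal F i).toMeasure ∧
        (∀ N ω, ∀ H ∈ 𝓕i i N ω, Integrable φi H.toMeasure) ∧
        (∀ᵐ ω ∂P, ∀ ε > (0:ℝ), ∀ᶠ N in atTop, ∀ H ∈ 𝓕i i N ω,
          |∫ t, φi t ∂H.toMeasure - (∑ k ∈ Finset.range N, φi (ξ k ω i)) / N| ≤ ε) ∧
        (∀ x ∈ X, ∃ ν η : ℝ, ∀ t : ℝ, |ci i x t| ≤ ν + η * φi t))
    -- each univariate test uniformly consistent for the `i`-th marginal of `F`
    (hUCi : ∀ i : Fin d, ∀ᵐ ω ∂P, ∀ H : ℕ → ProbabilityMeasure ℝ,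
      ¬ Tendsto H atTop (𝓝 (marginal F i)) → ∃ᶠ N in atTop, H N ∉ 𝓕i i N ω) :
    -- c-consistency of the test of marginals
    ∀ᵐ ω ∂P, ∀ G : ℕ → ProbabilityMeasure (EuclideanSpace ℝ (Fin d)),
      (∀ N, (G N).toMeasure Ξᶜ = 0) →
      (∀ᶠ N in atTop, ∀ i : Fin d, marginal (G N) i ∈ 𝓕i i N ω) →
      ∀ x ∈ X, Tendsto (fun N => ∫ ξv, (∑ i, ci i x (ξv i)) ∂(G N).toMeasure) atTop
        (𝓝 (∫ ξv, (∑ i, ci i x (ξv i)) ∂F.toMeasure)) := by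
  have coordinatewise (i : Fin d) : ∀ᵐ ω ∂P, ∀ G : ℕ → ProbabilityMeasure _,
      (∀ N, (G N).toMeasure Ξᶜ = 0) → (∀ᶠ N in atTop, marginal (G N) i ∈ 𝓕i i N ω) →
      ∀ x ∈ X, Tendsto (fun N ↦ ∫ t, ci i x t ∂(marginal (G N) i).toMeasure) atTop
        (𝓝 (∫ t, ci i x t ∂(marginal F i).toMeasure)) := by
    rcases hgrow i with hbdd | ⟨φ, hφ, hφ₀, hφF, hφ𝓕, hφ_avg, hdom⟩
    · filter_upwards [hUCi i] with ω hUC G hGΞ hG x hx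
      exact tendsto_integral_of_tendsto_of_ae_mem_of_isBounded (tendsto_of_eventually_mem hUC hG)
        hbdd.closure (ae_marginal_mem_closure_image hFsupp)
        (fun N ↦ ae_marginal_mem_closure_image (hGΞ N)) (hcont i x hx)
    · filter_upwards [hUCi i, ae_tendsto_integral_of_abs_sub_average_le hξmeas
        (fun k l hkl ↦ hiid.indepFun hkl) hdist hφ.measurable hφF hφ_avg]
        with ω hUC hφ_tendsto G _ hG x hx
      obtain ⟨ν, η, hbd⟩ := hdom x hx
      exact tendsto_integral_of_tendsto_of_abs_le_add_mul (tendsto_of_eventually_mem hUC hG)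
        (hcont i x hx) hφ hφ₀ hbd hφF (hG.mono fun N hN ↦ hφ𝓕 N ω _ hN) (hφ_tendsto _ hG)
  filter_upwards [ae_all_iff.2 coordinatewise] with ω hω G hGΞ hG x hx
  rw [integral_sum_apply_eq_sum_integral_marginal fun i ↦ hFint i x hx]
  refine (tendsto_finsetSum _ fun i _ ↦ hω i G hGΞ (hG.mono fun N hN ↦ hN i) x hx).congr' ?_
  filter_upwards [hG] with N hN
  exact (integral_sum_apply_eq_sum_integral_marginal fun i ↦ h𝓕int i N ω _ (hN i) x hx).symm

/-- the test of marginals is c-consistent for separable costs.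
Suppose `c(x;ξ) = ∑_i c_i(x;ξ_i)` is separable, each `c_i` is equicontinuous in `x`,
continuous in `ξ_i`, integrable under the relevant marginals, and satisfies the stated
boundedness-or-growth condition, and suppose each univariate test `(𝓕_{i,N})` is
uniformly consistent for the `i`-th marginal `F_i` of `F`.  Then the test of marginals
is c-consistent for `F`: almost surely, every sequence `(G_N)` whose marginals
eventually all lie in the respective regions satisfies
`E_{G_N}[c(x;ξ)] → E_F[c(x;ξ)]` for every `x ∈ X`. -/
theorem stmt15 {d dx : ℕ} {Ω : Type*} [MeasurableSpace Ω]
    (P : Measure Ω) [IsProbabilityMeasure P]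
    (Ξ : Set (EuclideanSpace ℝ (Fin d))) (hΞ : IsClosed Ξ)
    (X : Set (EuclideanSpace ℝ (Fin dx))) (hXne : X.Nonempty)
    (F : ProbabilityMeasure (EuclideanSpace ℝ (Fin d))) (hFsupp : F.toMeasure Ξᶜ = 0)
    -- i.i.d. data drawn from `F`
    (ξ : ℕ → Ω → EuclideanSpace ℝ (Fin d)) (hξmeas : ∀ i, Measurable (ξ i))
    (hiid : ProbabilityTheory.iIndepFun ξ P)
    (hdist : ∀ i, Measure.map (ξ i) P = F.toMeasure)
    -- the univariate confidence regions for each coordinate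
    (𝓕i : Fin d → ℕ → Ω → Set (ProbabilityMeasure ℝ))
    -- the separable cost `c(x;ξ) = ∑ i, ci i x (ξ i)`
    (ci : Fin d → EuclideanSpace ℝ (Fin dx) → ℝ → ℝ)
    (hcmeas : ∀ i, ∀ x ∈ X, Measurable (ci i x))
    -- each `c_i` equicontinuous in `x` and continuous in `ξ_i`
    (hequi : ∀ i, ∀ x ∈ X, ∀ ε > (0:ℝ), ∃ δ > (0:ℝ), ∀ x' ∈ X, ‖x - x'‖ < δ →
      ∀ t : ℝ, |ci i x t - ci i x' t| < ε)
    (hcont : ∀ i, ∀ x ∈ X, Continuous (ci i x))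
    -- integrability under the relevant marginals
    (hFint : ∀ i, ∀ x ∈ X, Integrable (ci i x) (marginal F i).toMeasure)
    (h𝓕int : ∀ i N ω, ∀ H ∈ 𝓕i i N ω, ∀ x ∈ X, Integrable (ci i x) H.toMeasure)
    -- boundedness of the `i`-th projection of `Ξ`, or growth control via `φ_i`
    (hgrow : ∀ i : Fin d, Bornology.IsBounded ((fun ξv => ξv i) '' Ξ) ∨
      ∃ φi : ℝ → ℝ, Continuous φi ∧ (∀ t, 0 ≤ φi t) ∧
        Integrable φi (marginal F i).toMeasure ∧
        (∀ N ω, ∀ H ∈ 𝓕i i N ω, Integrable φi H.toMeasure) ∧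
        (∀ᵐ ω ∂P, ∀ ε > (0:ℝ), ∀ᶠ N in atTop, ∀ H ∈ 𝓕i i N ω,
          |∫ t, φi t ∂H.toMeasure - (∑ k ∈ Finset.range N, φi (ξ k ω i)) / N| ≤ ε) ∧
        (∀ x ∈ X, ∃ ν η : ℝ, ∀ t : ℝ, |ci i x t| ≤ ν + η * φi t))
    -- each univariate test uniformly consistent for the `i`-th marginal of `F`
    (hUCi : ∀ i : Fin d, ∀ᵐ ω ∂P, ∀ H : ℕ → ProbabilityMeasure ℝ,
      ¬ Tendsto H atTop (𝓝 (marginal F i)) → ∃ᶠ N in atTop, H N ∉ 𝓕i i N ω) :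
    -- c-consistency of the test of marginals
    ∀ᵐ ω ∂P, ∀ G : ℕ → ProbabilityMeasure (EuclideanSpace ℝ (Fin d)),
      (∀ N, (G N).toMeasure Ξᶜ = 0) →
      (∀ᶠ N in atTop, ∀ i : Fin d, marginal (G N) i ∈ 𝓕i i N ω) →
      ∀ x ∈ X, Tendsto (fun N => ∫ ξv, (∑ i, ci i x (ξv i)) ∂(G N).toMeasure) atTop
        (𝓝 (∫ ξv, (∑ i, ci i x (ξv i)) ∂F.toMeasure)) :=
  stmt15_general P Ξ X F hFsupp ξ hξmeas hiid hdist 𝓕i ci hcont hFint h𝓕int hgrow hUCi
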